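/- arXiv:1305.6237 — 5 statements merged into one kernel-verified Lean document; each statement's English description precedes it below -/
import Mathlib

section
/- Let a, b be rational numbers with a·b ≠ 0 and let t be a rational number such that t ≠ 0, 4bt² ≠ 1, a²t + 8bt² ≠ 2, a²t - 8bt² ≠ 2, and 64b²t⁴ - (a⁴+32b)t² + 4 ≠ 0. Define x₁ = 8a(4bt²-1)/(-64b²t⁴+(a⁴+32b)t²-4), x₂ = -32abt²(4bt²-1)/((a²t-8bt²+2)(a²t+8bt²-2)), x₃ = (a²t+8bt²-2)³/(16at(4bt²-1)(a²t-8bt²+2)), and x₄ = a - x₁ - x₂ - x₃. Then x₁+x₂+x₃+x₄ = a and x₁·x₂·x₃·x₄ = b. -/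
/-!
Put `u = 4bt² - 1`, `P = a²t - 2u` and `Q = a²t + 2u`. The quartic in the hypotheses is `-PQ`,
so it controls both `P` and `Q`, and `x₄` has the closed form `-P³ / (16atuQ)`, mirroring
`x₃ = Q³ / (16atuP)`. Then `x₃x₄ = -(PQ)² / (16atu)²` while `x₁x₂ = -64a²u²(u + 1) / (PQ)²`,
and the product of the two is `(u + 1) / (4t²) = b`.
-/

namespace SumProductQuadruple

variable {K : Type*} [Field K] (a b t : K)

def x₁ : K := 8 * a * (4 * b * t ^ 2 - 1) / (-64 * b ^ 2 * t ^ 4 + (a ^ 4 + 32 * b) * t ^ 2 - 4)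

def x₂ : K := -(32 * a * b * t ^ 2 * (4 * b * t ^ 2 - 1)) /
    ((a ^ 2 * t - 8 * b * t ^ 2 + 2) * (a ^ 2 * t + 8 * b * t ^ 2 - 2))

def x₃ : K := (a ^ 2 * t + 8 * b * t ^ 2 - 2) ^ 3 /
    (16 * a * t * (4 * b * t ^ 2 - 1) * (a ^ 2 * t - 8 * b * t ^ 2 + 2))

def x₄ : K := -(a ^ 2 * t - 8 * b * t ^ 2 + 2) ^ 3 /
    (16 * a * t * (4 * b * t ^ 2 - 1) * (a ^ 2 * t + 8 * b * t ^ 2 - 2))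

theorem quartic_eq_neg_mul :
    64 * b ^ 2 * t ^ 4 - (a ^ 4 + 32 * b) * t ^ 2 + 4 =
      -((a ^ 2 * t - 8 * b * t ^ 2 + 2) * (a ^ 2 * t + 8 * b * t ^ 2 - 2)) := by
  ring

theorem x₁_eq : x₁ a b t = 8 * a * (4 * b * t ^ 2 - 1) /
    ((a ^ 2 * t - 8 * b * t ^ 2 + 2) * (a ^ 2 * t + 8 * b * t ^ 2 - 2)) := by
  rw [x₁]
  congr 1
  ring

theorem sixteen_ne_zero (h2 : (2 : K) ≠ 0) : (16 : K) ≠ 0 := by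
  simpa [show (16 : K) = 2 ^ 4 by norm_num] using pow_ne_zero 4 h2

variable {a b t} (h2 : (2 : K) ≠ 0) (ha : a ≠ 0) (ht : t ≠ 0) (hu : 4 * b * t ^ 2 - 1 ≠ 0)
  (hP : a ^ 2 * t - 8 * b * t ^ 2 + 2 ≠ 0) (hQ : a ^ 2 * t + 8 * b * t ^ 2 - 2 ≠ 0)
include h2 ha ht hu hP hQ

theorem x₁_add_x₂_add_x₃_add_x₄ : x₁ a b t + x₂ a b t + x₃ a b t + x₄ a b t = a := by
  have h16 := sixteen_ne_zero h2
  rw [x₁_eq, x₂, x₃, x₄, ← add_div, div_add_div _ _ (by simp [*]) (by simp [*]),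
    div_add_div _ _ (by simp [*]) (by simp [*]), div_eq_iff (by simp [*])]
  ring

theorem x₁_mul_x₂_mul_x₃_mul_x₄ : x₁ a b t * x₂ a b t * x₃ a b t * x₄ a b t = b := by
  have h16 := sixteen_ne_zero h2
  rw [x₁_eq, x₂, x₃, x₄, div_mul_div_comm, div_mul_div_comm, div_mul_div_comm,
    div_eq_iff (by simp [*])]
  ring

end SumProductQuadruple

open SumProductQuadruple in
theorem stmt2_general (a b t : ℚ) (hab : a * b ≠ 0) (ht : t ≠ 0)
    (h1 : 4 * b * t ^ 2 ≠ 1)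
    (h4 : 64 * b ^ 2 * t ^ 4 - (a ^ 4 + 32 * b) * t ^ 2 + 4 ≠ 0) :
    let x1 := 8 * a * (4 * b * t ^ 2 - 1) /
      (-64 * b ^ 2 * t ^ 4 + (a ^ 4 + 32 * b) * t ^ 2 - 4)
    let x2 := -(32 * a * b * t ^ 2 * (4 * b * t ^ 2 - 1)) /
      ((a ^ 2 * t - 8 * b * t ^ 2 + 2) * (a ^ 2 * t + 8 * b * t ^ 2 - 2))
    let x3 := (a ^ 2 * t + 8 * b * t ^ 2 - 2) ^ 3 /
      (16 * a * t * (4 * b * t ^ 2 - 1) * (a ^ 2 * t - 8 * b * t ^ 2 + 2))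
    let x4 := a - x1 - x2 - x3
    x1 + x2 + x3 + x4 = a ∧ x1 * x2 * x3 * x4 = b := by
  intro x1 x2 x3 x4
  have ha : a ≠ 0 := left_ne_zero_of_mul hab
  have hu : 4 * b * t ^ 2 - 1 ≠ 0 := sub_ne_zero.mpr h1
  obtain ⟨hP, hQ⟩ := mul_ne_zero_iff.mp (neg_ne_zero.mp (quartic_eq_neg_mul a b t ▸ h4))
  have hx4 : x4 = x₄ a b t := by
    show a - x₁ a b t - x₂ a b t - x₃ a b t = _
    linear_combination -x₁_add_x₂_add_x₃_add_x₄ two_ne_zero ha ht hu hP hQ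
  refine ⟨show x1 + x2 + x3 + (a - x1 - x2 - x3) = a by ring, ?_⟩
  rw [hx4]
  exact x₁_mul_x₂_mul_x₃_mul_x₄ two_ne_zero ha ht hu hP hQ

theorem stmt2 (a b t : ℚ) (hab : a * b ≠ 0) (ht : t ≠ 0)
    (h1 : 4 * b * t ^ 2 ≠ 1)
    (h2 : a ^ 2 * t + 8 * b * t ^ 2 ≠ 2)
    (h3 : a ^ 2 * t - 8 * b * t ^ 2 ≠ 2)
    (h4 : 64 * b ^ 2 * t ^ 4 - (a ^ 4 + 32 * b) * t ^ 2 + 4 ≠ 0) :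
    let x1 := 8 * a * (4 * b * t ^ 2 - 1) /
      (-64 * b ^ 2 * t ^ 4 + (a ^ 4 + 32 * b) * t ^ 2 - 4)
    let x2 := -(32 * a * b * t ^ 2 * (4 * b * t ^ 2 - 1)) /
      ((a ^ 2 * t - 8 * b * t ^ 2 + 2) * (a ^ 2 * t + 8 * b * t ^ 2 - 2))
    let x3 := (a ^ 2 * t + 8 * b * t ^ 2 - 2) ^ 3 /
      (16 * a * t * (4 * b * t ^ 2 - 1) * (a ^ 2 * t - 8 * b * t ^ 2 + 2))
    let x4 := a - x1 - x2 - x3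
    x1 + x2 + x3 + x4 = a ∧ x1 * x2 * x3 * x4 = b :=
  stmt2_general a b t hab ht h1 h4
end

section
/- Let u, v, w, t, m, a, b be rational numbers with b ≠ 0, m ≠ 0, v ≠ 0, w ≠ 0 and such that the denominators below are nonzero. Define P = w(bv³ - mw³)/(v(bv³ + ((a-t)m - bu)vw + 2mw³)), Q = -bv²(bv³ + ((a-t)m - bu)vw + 2mw³)/(mw²(2bv³ + ((a-t)m - bu)vw + mw³)), R = -w(2bv³ + ((a-t)m - bu)vw + mw³)/(v(bv³ - mw³)). Then u·PQR + v·(PQ+QR+RP) + w·(P+Q+R) + t = a and m·PQR = b. -/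
/-!
Write `d₁ = bv³ - mw³` and `d₂ = bv³ + ((a-t)m - bu)vw + 2mw³`; the third denominator is `d₁ + d₂`,
so `P = wd₁/(vd₂)`, `Q = -bv²d₂/(mw²(d₁+d₂))`, `R = -w(d₁+d₂)/(vd₁)`, and `PQR` telescopes to `b/m`.
Regrouping `v(PQ + QR + RP) + w(P + Q + R) = Q(vP + w) + P(vR + w) + R(vQ + w)`, each factor
`vX + w` cancels a denominator, leaving `-bv²/(mw) - w²/v + (d₂ - mw³)/(mvw)`, and substituting `d₂`
turns this into `a - t - ub/m`.
-/

section

variable {K : Type*} [Field K] {u v w t m a b d₁ d₂ P Q R : K}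

theorem mul_mul_eq_div_of_param (hv : v ≠ 0) (hw : w ≠ 0) (hm : m ≠ 0) (hd₁ : d₁ ≠ 0)
    (hd₂ : d₂ ≠ 0) (hd₁₂ : d₁ + d₂ ≠ 0) (hP : P = w * d₁ / (v * d₂))
    (hQ : Q = -(b * v ^ 2 * d₂) / (m * w ^ 2 * (d₁ + d₂))) (hR : R = -(w * (d₁ + d₂)) / (v * d₁)) :
    P * Q * R = b / m := by
  subst hP hQ hR
  field_simp

theorem pair_sums_eq_of_param (hv : v ≠ 0) (hw : w ≠ 0) (hm : m ≠ 0) (hd₁ : d₁ ≠ 0)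
    (hd₂ : d₂ ≠ 0) (hd₁₂ : d₁ + d₂ ≠ 0) (e₁ : d₁ = b * v ^ 3 - m * w ^ 3)
    (hP : P = w * d₁ / (v * d₂)) (hQ : Q = -(b * v ^ 2 * d₂) / (m * w ^ 2 * (d₁ + d₂)))
    (hR : R = -(w * (d₁ + d₂)) / (v * d₁)) :
    v * (P * Q + Q * R + R * P) + w * (P + Q + R) =
      -(b * v ^ 2) / (m * w) - w ^ 2 / v + (d₂ - m * w ^ 3) / (m * v * w) := by
  have hvP : v * P + w = w * (d₁ + d₂) / d₂ := by
    rw [hP]; field_simp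
  have hvR : v * R + w = -(w * d₂) / d₁ := by
    rw [hR]; field_simp; ring
  -- `-bv³d₂ + mw³(d₁ + d₂) = d₁(mw³ - d₂)` because `bv³ = d₁ + mw³`
  have hvQ : v * Q + w = d₁ * (m * w ^ 3 - d₂) / (m * w ^ 2 * (d₁ + d₂)) := by
    rw [hQ]; field_simp; rw [e₁]; ring
  calc v * (P * Q + Q * R + R * P) + w * (P + Q + R)
      = Q * (v * P + w) + P * (v * R + w) + R * (v * Q + w) := by ring
    _ = -(b * v ^ 2) / (m * w) - w ^ 2 / v + (d₂ - m * w ^ 3) / (m * v * w) := by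
      rw [hvP, hvR, hvQ, hP, hQ, hR]
      field_simp
      ring

theorem prod_and_pair_sums_eq_of_param (hv : v ≠ 0) (hw : w ≠ 0) (hm : m ≠ 0)
    (hd₁ : d₁ ≠ 0) (hd₂ : d₂ ≠ 0) (hd₁₂ : d₁ + d₂ ≠ 0) (e₁ : d₁ = b * v ^ 3 - m * w ^ 3)
    (e₂ : d₂ = b * v ^ 3 + ((a - t) * m - b * u) * v * w + 2 * m * w ^ 3)
    (hP : P = w * d₁ / (v * d₂)) (hQ : Q = -(b * v ^ 2 * d₂) / (m * w ^ 2 * (d₁ + d₂)))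
    (hR : R = -(w * (d₁ + d₂)) / (v * d₁)) :
    u * (P * Q * R) + v * (P * Q + Q * R + R * P) + w * (P + Q + R) + t = a ∧
      m * (P * Q * R) = b := by
  have hprod := mul_mul_eq_div_of_param hv hw hm hd₁ hd₂ hd₁₂ hP hQ hR
  have hpairs := pair_sums_eq_of_param hv hw hm hd₁ hd₂ hd₁₂ e₁ hP hQ hR
  constructor
  · rw [add_assoc (u * _), hpairs, hprod, e₂]
    field_simp
    ring
  · rw [hprod]
    field_simp

end

theorem stmt5_general (u v w t m a b : ℚ) (hm : m ≠ 0) (hv : v ≠ 0) (hw : w ≠ 0)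
    (h1 : b * v ^ 3 - m * w ^ 3 ≠ 0)
    (h2 : b * v ^ 3 + ((a - t) * m - b * u) * v * w + 2 * m * w ^ 3 ≠ 0)
    (h3 : 2 * b * v ^ 3 + ((a - t) * m - b * u) * v * w + m * w ^ 3 ≠ 0) :
    let P := w * (b * v ^ 3 - m * w ^ 3) /
      (v * (b * v ^ 3 + ((a - t) * m - b * u) * v * w + 2 * m * w ^ 3))
    let Q := -(b * v ^ 2 * (b * v ^ 3 + ((a - t) * m - b * u) * v * w + 2 * m * w ^ 3)) /
      (m * w ^ 2 * (2 * b * v ^ 3 + ((a - t) * m - b * u) * v * w + m * w ^ 3))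
    let R := -(w * (2 * b * v ^ 3 + ((a - t) * m - b * u) * v * w + m * w ^ 3)) /
      (v * (b * v ^ 3 - m * w ^ 3))
    u * (P * Q * R) + v * (P * Q + Q * R + R * P) + w * (P + Q + R) + t = a ∧
      m * (P * Q * R) = b := by
  intro P Q R
  have hsum : 2 * b * v ^ 3 + ((a - t) * m - b * u) * v * w + m * w ^ 3 =
      (b * v ^ 3 - m * w ^ 3) + (b * v ^ 3 + ((a - t) * m - b * u) * v * w + 2 * m * w ^ 3) := by
    ring
  rw [hsum] at h3
  exact prod_and_pair_sums_eq_of_param hv hw hm h1 h2 h3 rfl rfl rfl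
    (by simp only [Q, hsum]) (by simp only [R, hsum])

theorem stmt5 (u v w t m a b : ℚ) (hb : b ≠ 0) (hm : m ≠ 0) (hv : v ≠ 0) (hw : w ≠ 0)
    (h1 : b * v ^ 3 - m * w ^ 3 ≠ 0)
    (h2 : b * v ^ 3 + ((a - t) * m - b * u) * v * w + 2 * m * w ^ 3 ≠ 0)
    (h3 : 2 * b * v ^ 3 + ((a - t) * m - b * u) * v * w + m * w ^ 3 ≠ 0) :
    let P := w * (b * v ^ 3 - m * w ^ 3) /
      (v * (b * v ^ 3 + ((a - t) * m - b * u) * v * w + 2 * m * w ^ 3))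
    let Q := -(b * v ^ 2 * (b * v ^ 3 + ((a - t) * m - b * u) * v * w + 2 * m * w ^ 3)) /
      (m * w ^ 2 * (2 * b * v ^ 3 + ((a - t) * m - b * u) * v * w + m * w ^ 3))
    let R := -(w * (2 * b * v ^ 3 + ((a - t) * m - b * u) * v * w + m * w ^ 3)) /
      (v * (b * v ^ 3 - m * w ^ 3))
    u * (P * Q * R) + v * (P * Q + Q * R + R * P) + w * (P + Q + R) + t = a ∧
      m * (P * Q * R) = b :=
  stmt5_general u v w t m a b hm hv hw h1 h2 h3
end

section
/- Let p, q, r be rational numbers with p ≠ q, q ≠ r, p ≠ r and p, q, r all nonzero. Define P = pr(p-q)(q-r)/(q(p-r)²), Q = qr(q-p)(p-r)/(p(q-r)²), R = pq(p-r)(r-q)/(r(p-q)²). Then for any rational t, σ₃(t, P, Q, R) = σ₃(t, p, q, r) and σ₄(t, P, Q, R) = σ₄(t, p, q, r); equivalently PQ + QR + RP = pq + qr + rp and PQR = pqr. -/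
/-!
The pairwise products of `P, Q, R` simplify: `P * Q = -r² (p - q)² / ((p - r) (q - r))`, and
cyclically. Multiplying by `R` gives `P * Q * R = p * q * r` at once, and summing the three
products gives `p * q + q * r + r * p` after clearing the denominator `(p - q) (q - r) (r - p)`.
Adjoining `t` to a triple changes `σ₃` and `σ₄` by `t σ₂` and `t σ₃`, so both identities for
`{t, P, Q, R}` follow from these two.
-/

/-- The `k`-th elementary symmetric function of a multiset of rationals
(`esymm s 0 = 1`, and `esymm s k = 0` for `k > card s`). -/
def esymm (s : Multiset ℚ) (k : ℕ) : ℚ := ((s.powersetCard k).map Multiset.prod).sum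

/-- Elementary symmetric function with integer index: `0` for negative indices. -/
def esymmZ (s : Multiset ℚ) (k : ℤ) : ℚ := if k < 0 then 0 else esymm s k.toNat

/-- The `k`-th elementary symmetric polynomial evaluated at a tuple. -/
def sigma {n : ℕ} (x : Fin n → ℚ) (k : ℕ) : ℚ := esymm (Multiset.map x Finset.univ.val) k

lemma esymm_cons_succ (a : ℚ) (s : Multiset ℚ) (k : ℕ) :
    esymm (a ::ₘ s) (k + 1) = esymm s (k + 1) + a * esymm s k := by
  simp [esymm, Multiset.powersetCard_cons, Multiset.map_map,
    Multiset.sum_map_mul_left]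

lemma esymm_cons_succ_congr (a : ℚ) {s s' : Multiset ℚ} {k : ℕ}
    (hk : esymm s k = esymm s' k) (hk' : esymm s (k + 1) = esymm s' (k + 1)) :
    esymm (a ::ₘ s) (k + 1) = esymm (a ::ₘ s') (k + 1) := by
  rw [esymm_cons_succ, esymm_cons_succ, hk, hk']

lemma esymm_eq_zero_of_card_lt {s : Multiset ℚ} {k : ℕ} (h : Multiset.card s < k) :
    esymm s k = 0 := by
  simp [esymm, Multiset.powersetCard_eq_empty k h]

lemma esymm_triple_two (a b c : ℚ) : esymm {a, b, c} 2 = a * b + b * c + c * a := by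
  simp [esymm, Multiset.powersetCard_one]
  ring

lemma esymm_triple_three (a b c : ℚ) : esymm {a, b, c} 3 = a * b * c := by
  simp [esymm, Multiset.powersetCard_one]
  ring

/-- `P = partner p q r`, `Q = partner q p r`, `R = partner p r q`. -/
def partner (a b c : ℚ) : ℚ := a * c * (a - b) * (b - c) / (b * (a - c) ^ 2)

lemma partner_symm (a b c : ℚ) : partner a b c = partner c b a := by
  unfold partner
  ring

lemma partner_mul_partner {a b c : ℚ} (ha : a ≠ 0) (hb : b ≠ 0) (hac : a ≠ c) (hbc : b ≠ c) :
    partner a b c * partner b a c = -c ^ 2 * (a - b) ^ 2 / ((a - c) * (b - c)) := by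
  have hac' : a - c ≠ 0 := sub_ne_zero.mpr hac
  have hbc' : b - c ≠ 0 := sub_ne_zero.mpr hbc
  unfold partner
  field_simp
  ring

lemma partner_pairwise_products_sum {p q r : ℚ} (hpq : p ≠ q) (hqr : q ≠ r) (hpr : p ≠ r)
    (hp : p ≠ 0) (hq : q ≠ 0) (hr : r ≠ 0) :
    partner p q r * partner q p r + partner q p r * partner p r q +
      partner p r q * partner p q r = p * q + q * r + r * p := by
  have hQR := partner_mul_partner hr hp hqr.symm hpq
  have hRP := partner_mul_partner hq hr hpq.symm hpr.symm
  rw [partner_symm r p q] at hQR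
  rw [partner_symm q r p, partner_symm r q p] at hRP
  rw [partner_mul_partner hp hq hpr hqr, hQR, hRP]
  have hpq' : p - q ≠ 0 := sub_ne_zero.mpr hpq
  have hqr' : q - r ≠ 0 := sub_ne_zero.mpr hqr
  have hpr' : p - r ≠ 0 := sub_ne_zero.mpr hpr
  field_simp
  ring

lemma partner_product {p q r : ℚ} (hpq : p ≠ q) (hqr : q ≠ r) (hpr : p ≠ r)
    (hp : p ≠ 0) (hq : q ≠ 0) (hr : r ≠ 0) :
    partner p q r * partner q p r * partner p r q = p * q * r := by
  rw [partner_mul_partner hp hq hpr hqr]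
  have hpq' : p - q ≠ 0 := sub_ne_zero.mpr hpq
  have hqr' : q - r ≠ 0 := sub_ne_zero.mpr hqr
  have hpr' : p - r ≠ 0 := sub_ne_zero.mpr hpr
  unfold partner
  field_simp
  ring

theorem stmt7 (p q r : ℚ) (hpq : p ≠ q) (hqr : q ≠ r) (hpr : p ≠ r)
    (hp : p ≠ 0) (hq : q ≠ 0) (hr : r ≠ 0) :
    let P := p * r * (p - q) * (q - r) / (q * (p - r) ^ 2)
    let Q := q * r * (q - p) * (p - r) / (p * (q - r) ^ 2)
    let R := p * q * (p - r) * (r - q) / (r * (p - q) ^ 2)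
    (∀ t : ℚ, esymm {t, P, Q, R} 3 = esymm {t, p, q, r} 3 ∧
      esymm {t, P, Q, R} 4 = esymm {t, p, q, r} 4) ∧
    P * Q + Q * R + R * P = p * q + q * r + r * p ∧ P * Q * R = p * q * r := by
  intro P Q R
  have hσ₂ : P * Q + Q * R + R * P = p * q + q * r + r * p :=
    partner_pairwise_products_sum hpq hqr hpr hp hq hr
  have hσ₃ : P * Q * R = p * q * r := partner_product hpq hqr hpr hp hq hr
  have h₂ : esymm {P, Q, R} 2 = esymm {p, q, r} 2 := by
    rw [esymm_triple_two, esymm_triple_two, hσ₂]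
  have h₃ : esymm {P, Q, R} 3 = esymm {p, q, r} 3 := by
    rw [esymm_triple_three, esymm_triple_three, hσ₃]
  have h₄ : esymm {P, Q, R} 4 = esymm {p, q, r} 4 := by
    rw [esymm_eq_zero_of_card_lt (by simp), esymm_eq_zero_of_card_lt (by simp)]
  exact ⟨fun t => ⟨esymm_cons_succ_congr t h₂ h₃, esymm_cons_succ_congr t h₃ h₄⟩, hσ₂, hσ₃⟩
end

section
/- Let r be a rational number such that 171r⁴ - 740r³ + 1356r² - 1200r + 449 ≠ 0, 17r⁴ - 88r³ + 188r² - 192r + 81 ≠ 0, and 6r⁴ - 28r³ + 61r² - 66r + 33 ≠ 0. Define R = (102r⁵ - 525r⁴ + 1138r³ - 1164r² + 456r + 65)/(171r⁴ - 740r³ + 1356r² - 1200r + 449), P = (11r⁴ - 43r³ + 79r² - 73r + 32)/(17r⁴ - 88r³ + 188r² - 192r + 81), Q = (29r⁴ - 138r³ + 271r² - 254r + 98)/(6r⁴ - 28r³ + 61r² - 66r + 33). Then σ₃(1, 1, P, Q, R) = σ₃(1, 1, 1, 2, r) and σ₄(1, 1, P, Q, R) = σ₄(1, 1, 1, 2,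 r). -/
/-! Expanding `σ₃` and `σ₄` of a five-element multiset and clearing the three denominators of
`P`, `Q`, `R` turns both equations into polynomial identities in `r`. -/

lemma esymm_zero_right (s : Multiset ℚ) : esymm s 0 = 1 := by
  simp only [esymm, Multiset.powersetCard_zero_left, Multiset.map_singleton, Multiset.prod_zero,
    Multiset.sum_singleton]

lemma esymm_zero_left_succ (k : ℕ) : esymm 0 (k + 1) = 0 := by
  simp only [esymm, Multiset.powersetCard_zero_right, Multiset.map_zero, Multiset.sum_zero]

lemma esymm_quintuple_three (a b c d e : ℚ) :
    esymm {a, b, c, d, e} 3 =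
      a * b * (c + d + e) + (a + b) * (c * d + c * e + d * e) + c * d * e := by
  simp only [Multiset.insert_eq_cons, ← Multiset.cons_zero, esymm_cons_succ, esymm_zero_right,
    esymm_zero_left_succ]
  ring

lemma esymm_quintuple_four (a b c d e : ℚ) :
    esymm {a, b, c, d, e} 4 = a * b * (c * d + c * e + d * e) + (a + b) * (c * d * e) := by
  simp only [Multiset.insert_eq_cons, ← Multiset.cons_zero, esymm_cons_succ, esymm_zero_right,
    esymm_zero_left_succ]
  ring

section Fractions

variable (u v a c e : ℚ) {b d f : ℚ}

lemma esymm_three_of_fractions (hb : b ≠ 0) (hd : d ≠ 0) (hf : f ≠ 0) :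
    esymm {u, v, a / b, c / d, e / f} 3 =
      (u * v * (a * d * f + b * c * f + b * d * e) + (u + v) * (a * c * f + a * d * e + b * c * e)
        + a * c * e) / (b * d * f) := by
  rw [esymm_quintuple_three]
  field_simp

lemma esymm_four_of_fractions (hb : b ≠ 0) (hd : d ≠ 0) (hf : f ≠ 0) :
    esymm {u, v, a / b, c / d, e / f} 4 =
      (u * v * (a * c * f + a * d * e + b * c * e) + (u + v) * (a * c * e)) / (b * d * f) := by
  rw [esymm_quintuple_four]
  field_simp

end Fractions

theorem stmt10 (r : ℚ)
    (h1 : 171 * r ^ 4 - 740 * r ^ 3 + 1356 * r ^ 2 - 1200 * r + 449 ≠ 0)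
    (h2 : 17 * r ^ 4 - 88 * r ^ 3 + 188 * r ^ 2 - 192 * r + 81 ≠ 0)
    (h3 : 6 * r ^ 4 - 28 * r ^ 3 + 61 * r ^ 2 - 66 * r + 33 ≠ 0) :
    let R := (102 * r ^ 5 - 525 * r ^ 4 + 1138 * r ^ 3 - 1164 * r ^ 2 + 456 * r + 65) /
      (171 * r ^ 4 - 740 * r ^ 3 + 1356 * r ^ 2 - 1200 * r + 449)
    let P := (11 * r ^ 4 - 43 * r ^ 3 + 79 * r ^ 2 - 73 * r + 32) /
      (17 * r ^ 4 - 88 * r ^ 3 + 188 * r ^ 2 - 192 * r + 81)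
    let Q := (29 * r ^ 4 - 138 * r ^ 3 + 271 * r ^ 2 - 254 * r + 98) /
      (6 * r ^ 4 - 28 * r ^ 3 + 61 * r ^ 2 - 66 * r + 33)
    esymm {1, 1, P, Q, R} 3 = esymm {1, 1, 1, 2, r} 3 ∧
      esymm {1, 1, P, Q, R} 4 = esymm {1, 1, 1, 2, r} 4 := by
  dsimp only
  have hden := mul_ne_zero (mul_ne_zero h2 h3) h1
  rw [esymm_three_of_fractions _ _ _ _ _ h2 h3 h1, esymm_four_of_fractions _ _ _ _ _ h2 h3 h1,
    esymm_quintuple_three, esymm_quintuple_four, div_eq_iff hden, div_eq_iff hden]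
  constructor <;> ring
end

section
/- Let a, d, t be rational numbers. Define P = (a - d + 2dt + (a+d)t²)/(4(1+t²)), Q = (a - d - 2dt + (a+d)t²)/(4(1+t²)), R = (a + d - 2dt + (a-d)t²)/(4(1+t²)), S = (a + d + 2dt + (a-d)t²)/(4(1+t²)). Then σ₁(P,Q,R,S) = a, σ₂(P,Q,R,S) = (3a² - d²)/8, and σ₃(P,Q,R,S) = a(a² - d²)/16. -/
lemma esymm_quad_one (w x y z : ℚ) : esymm {w, x, y, z} 1 = w + x + y + z := by
  simp [esymm, Multiset.powersetCard_cons, Multiset.powersetCard_one]; ring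

lemma esymm_quad_two (w x y z : ℚ) :
    esymm {w, x, y, z} 2 = w * x + w * y + w * z + x * y + x * z + y * z := by
  simp [esymm, Multiset.powersetCard_cons, Multiset.powersetCard_one]; ring

lemma esymm_quad_three (w x y z : ℚ) :
    esymm {w, x, y, z} 3 = w * x * y + w * x * z + w * y * z + x * y * z := by
  simp [esymm, Multiset.powersetCard_cons, Multiset.powersetCard_one]; ring

theorem stmt11 (a d t : ℚ) :
    let P := (a - d + 2 * d * t + (a + d) * t ^ 2) / (4 * (1 + t ^ 2))
    let Q := (a - d - 2 * d * t + (a + d) * t ^ 2) / (4 * (1 + t ^ 2))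
    let R := (a + d - 2 * d * t + (a - d) * t ^ 2) / (4 * (1 + t ^ 2))
    let S := (a + d + 2 * d * t + (a - d) * t ^ 2) / (4 * (1 + t ^ 2))
    esymm {P, Q, R, S} 1 = a ∧
      esymm {P, Q, R, S} 2 = (3 * a ^ 2 - d ^ 2) / 8 ∧
      esymm {P, Q, R, S} 3 = a * (a ^ 2 - d ^ 2) / 16 := by
  intro P Q R S
  have ht : (1 : ℚ) + t ^ 2 ≠ 0 := by positivity
  rw [esymm_quad_one, esymm_quad_two, esymm_quad_three]
  refine ⟨?_, ?_, ?_⟩ <;> simp only [P, Q, R, S] <;> field_simp <;> ring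
end
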